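/- Let n ≥ 1, k ≥ 2, let σ = (σ_2,…,σ_k) be a (k−1)-tuple of permutations of {1,…,n}, let σ_1 = id, and let π = σ^{-1} = (σ_2^{-1},…,σ_k^{-1}). For every π-eligible k-tuple x = (x_1,…,x_k), the set V = ⋃_{i=1}^{k} {σ_i(1),…,σ_i(x_i)} belongs to E(σ) and satisfies max{ j : {σ_i(1),…,σ_i(j)} ⊆ V } = x_i for every i ∈ {1,…,k}. In particular, the map U ↦ (U(1),…,U(k)) from E(σ) to C(σ^{-1}) is surjective. -/
import Mathlib


/-- The initial segment `{σ(1), …, σ(j)}` of a permutation `σ` of `{1,…,n}`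
(encoded on `Fin n`), as a finset; for `j = 0` this is `∅`. -/
def iniSeg {n : ℕ} (σ : Equiv.Perm (Fin n)) (j : ℕ) : Finset (Fin n) :=
  (Finset.univ.filter fun m : Fin n => (m : ℕ) < j).image σ

/-- The Edelman–Jamison lattice `E(σ)`: the join-subsemilattice of the powerset of
`{1,…,n}` (ordered by inclusion, with join `∪`) generated by the initial segments
`{σ_i(1),…,σ_i(j)}`, `1 ≤ i ≤ k`, `0 ≤ j ≤ n`. -/
def EJ {n k : ℕ} (σ : Fin k → Equiv.Perm (Fin n)) : Set (Finset (Fin n)) :=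
  supClosure {S | ∃ (i : Fin k) (j : ℕ), j ≤ n ∧ S = iniSeg (σ i) j}

/-- `π`-eligibility of a `k`-tuple `x ∈ {0,…,n}^k`: `π_{ij}(x_i + 1) ≥ x_j + 1` holds
whenever `x_i < n`, where `π_{ij} = π_{1j} ∘ π_{1i}⁻¹` (a value `v ∈ {1,…,n}` is encoded
as the element `v - 1` of `Fin n`). -/
def Eligible {n k : ℕ} (π : Fin k → Equiv.Perm (Fin n)) (x : Fin k → ℕ) : Prop :=
  (∀ i, x i ≤ n) ∧
    ∀ (i j : Fin k) (h : x i < n), x j + 1 ≤ ((π j) ((π i)⁻¹ ⟨x i, h⟩) : ℕ) + 1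

/-- `coordOf σ U i = max { j : {σ_i(1),…,σ_i(j)} ⊆ U }`, where `max ∅ = 0`. -/
noncomputable def coordOf {n k : ℕ} (σ : Fin k → Equiv.Perm (Fin n))
    (U : Finset (Fin n)) (i : Fin k) : ℕ :=
  sSup {j : ℕ | j ≤ n ∧ iniSeg (σ i) j ⊆ U}

lemma mem_iniSeg {n : ℕ} {σ : Equiv.Perm (Fin n)} {j : ℕ} {a : Fin n} :
    a ∈ iniSeg σ j ↔ ((σ⁻¹ a : Fin n) : ℕ) < j := by
  simp only [iniSeg, Finset.mem_image, Finset.mem_filter, Finset.mem_univ, true_and]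
  constructor
  · rintro ⟨m, hm, rfl⟩; simpa using hm
  · intro h; exact ⟨σ⁻¹ a, h, by simp⟩

/-- Let `n ≥ 1`, `k ≥ 2`, let `σ = (σ_2,…,σ_k)` be a `(k-1)`-tuple of
permutations of `{1,…,n}` (encoded with `σ 0 = id` playing the role of `σ_1`), and let
`π = σ⁻¹`. For every `π`-eligible tuple `x`, the set `V = ⋃_{i=1}^k {σ_i(1),…,σ_i(x_i)}`
belongs to `E(σ)` and satisfies `max { j : {σ_i(1),…,σ_i(j)} ⊆ V } = x_i` for all `i`.
In particular, `U ↦ (U(1),…,U(k))` maps `E(σ)` onto `C(σ⁻¹)`. -/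
theorem statement3 (n k : ℕ) (hn : 1 ≤ n) (hk : 2 ≤ k)
    (σ : Fin k → Equiv.Perm (Fin n)) (hσ : σ ⟨0, by omega⟩ = 1) :
    (∀ x : Fin k → ℕ, Eligible (fun i => (σ i)⁻¹) x →
      (Finset.univ.biUnion fun i => iniSeg (σ i) (x i)) ∈ EJ σ ∧
      ∀ i, coordOf σ (Finset.univ.biUnion fun i => iniSeg (σ i) (x i)) i = x i) ∧
    Set.SurjOn (coordOf σ) (EJ σ) {x | Eligible (fun i => (σ i)⁻¹) x} := by
  have key : ∀ x : Fin k → ℕ, Eligible (fun i => (σ i)⁻¹) x →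
      (Finset.univ.biUnion fun i => iniSeg (σ i) (x i)) ∈ EJ σ ∧
      ∀ i, coordOf σ (Finset.univ.biUnion fun i => iniSeg (σ i) (x i)) i = x i := by
    intro x hx
    obtain ⟨hxle, helig⟩ := hx
    set V : Finset (Fin n) := Finset.univ.biUnion fun i => iniSeg (σ i) (x i) with hV
    have : Nonempty (Fin k) := ⟨⟨0, by omega⟩⟩
    have huniv : (Finset.univ : Finset (Fin k)).Nonempty := Finset.univ_nonempty
    constructor
    · have : V = Finset.univ.sup' huniv (fun i => iniSeg (σ i) (x i)) := by
        rw [Finset.sup'_eq_sup, Finset.sup_eq_biUnion]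
      rw [this]
      exact finsetSup'_mem_supClosure huniv (fun i _ => ⟨i, x i, hxle i, rfl⟩)
    · intro i
      -- the key bound: any eligible `j` is at most `x i`
      have hbound : ∀ j ∈ {j : ℕ | j ≤ n ∧ iniSeg (σ i) j ⊆ V}, j ≤ x i := by
        rintro j ⟨hjn, hjV⟩
        by_contra hgt
        push_neg at hgt
        have hxin : x i < n := lt_of_lt_of_le hgt hjn
        set a : Fin n := σ i ⟨x i, hxin⟩ with ha
        have haj : a ∈ iniSeg (σ i) j := by
          rw [mem_iniSeg]; simp [ha]; omega
        have haV : a ∈ V := hjV haj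
        rw [hV, Finset.mem_biUnion] at haV
        obtain ⟨j', -, haj'⟩ := haV
        rw [mem_iniSeg] at haj'
        have := helig i j' hxin
        simp only [inv_inv] at this
        rw [ha] at haj'
        omega
      have hmem : x i ∈ {j : ℕ | j ≤ n ∧ iniSeg (σ i) j ⊆ V} :=
        ⟨hxle i, by rw [hV]; exact Finset.subset_biUnion_of_mem (fun i => iniSeg (σ i) (x i)) (Finset.mem_univ i)⟩
      refine le_antisymm (csSup_le ⟨x i, hmem⟩ hbound) (le_csSup ⟨x i, hbound⟩ hmem)
  refine ⟨key, ?_⟩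
  intro x hx
  exact ⟨_, (key x hx).1, funext (key x hx).2⟩
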